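/- There exist unique 𝕂(q)-algebra homomorphisms Δ: U' → U' ⊗ U' and ε: U' → 𝕂(q) satisfying Δ(X^{±1}) = X^{±1} ⊗ X^{±1}, Δ(Y) = (Y - 1) ⊗ X^{-1} + 1 ⊗ Y, Δ(Z) = (Z - 1) ⊗ X^{-1} + 1 ⊗ Z, and ε(X) = ε(Y) = ε(Z) = 1; moreover, under the isomorphism θ: U' → U_q(sl2) given by θ(X^{±1}) = K^{±1}, θ(Y) = K^{-1} + F(q - q^{-1}), θ(Z) = K^{-1} - K^{-1}Eq(q - q^{-1}), these correspond to the standard comultiplication and counit of U_q(sl2), i.e. (θ ⊗ θ) ∘ Δ = Δ_std ∘ θ and ε = ε_std ∘ θ, where Δ_std(E) = E ⊗ 1 + K ⊗ E, Δ_std(F) = F ⊗ K^{-1} + 1 ⊗ F, Δ_std(K^{±1}) = K^{±1} ⊗ K^{±1}, ε_std(E) = ε_std(F) = 0, ε_std(K) = 1. -/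

import Mathlib

open FreeAlgebra
open scoped TensorProduct

noncomputable section

/-- The field `𝕂(q)` of rational functions in the indeterminate `q` over `𝕂`. -/
abbrev Kq (K : Type) [Field K] : Type := RatFunc K

/-- The indeterminate `q` viewed as an element of `𝕂(q)`. -/
def qv (K : Type) [Field K] : Kq K := RatFunc.X

/-- Generators `E, F, K, K⁻¹` for the Chevalley presentation of `U_q(sl₂)`. -/
inductive SGen : Type | E | F | K | Kinv

/-- Generators `X, X⁻¹, Y, Z` for the equitable presentation. -/
inductive TGen : Type | X | Xinv | Y | Z

/-- The defining relations of `U_q(sl₂)` in the Chevalley presentation. -/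
inductive SRel (K : Type) [Field K] :
    FreeAlgebra (Kq K) SGen → FreeAlgebra (Kq K) SGen → Prop
  | r1a : SRel K (ι (Kq K) SGen.K * ι (Kq K) SGen.Kinv) 1
  | r1b : SRel K (ι (Kq K) SGen.Kinv * ι (Kq K) SGen.K) 1
  | r2 : SRel K (ι (Kq K) SGen.K * ι (Kq K) SGen.E * ι (Kq K) SGen.Kinv)
      ((qv K ^ 2) • ι (Kq K) SGen.E)
  | r3 : SRel K (ι (Kq K) SGen.K * ι (Kq K) SGen.F * ι (Kq K) SGen.Kinv)
      ((qv K ^ (-2 : ℤ)) • ι (Kq K) SGen.F)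
  | r4 : SRel K (ι (Kq K) SGen.E * ι (Kq K) SGen.F - ι (Kq K) SGen.F * ι (Kq K) SGen.E)
      ((qv K - (qv K)⁻¹)⁻¹ • (ι (Kq K) SGen.K - ι (Kq K) SGen.Kinv))

/-- The defining relations of the equitable presentation. -/
inductive TRel (K : Type) [Field K] :
    FreeAlgebra (Kq K) TGen → FreeAlgebra (Kq K) TGen → Prop
  | e1a : TRel K (ι (Kq K) TGen.X * ι (Kq K) TGen.Xinv) 1
  | e1b : TRel K (ι (Kq K) TGen.Xinv * ι (Kq K) TGen.X) 1
  | e2 : TRel K ((qv K - (qv K)⁻¹)⁻¹ •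
      (qv K • (ι (Kq K) TGen.X * ι (Kq K) TGen.Y) -
        (qv K)⁻¹ • (ι (Kq K) TGen.Y * ι (Kq K) TGen.X))) 1
  | e3 : TRel K ((qv K - (qv K)⁻¹)⁻¹ •
      (qv K • (ι (Kq K) TGen.Y * ι (Kq K) TGen.Z) -
        (qv K)⁻¹ • (ι (Kq K) TGen.Z * ι (Kq K) TGen.Y))) 1
  | e4 : TRel K ((qv K - (qv K)⁻¹)⁻¹ •
      (qv K • (ι (Kq K) TGen.Z * ι (Kq K) TGen.X) -
        (qv K)⁻¹ • (ι (Kq K) TGen.X * ι (Kq K) TGen.Z))) 1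

/-- `U_q(sl₂)` with the Chevalley presentation. -/
abbrev Usl2 (K : Type) [Field K] := RingQuot (SRel K)

/-- The algebra `U'` with the equitable presentation. -/
abbrev Ueq2 (K : Type) [Field K] := RingQuot (TRel K)

def genE (K : Type) [Field K] : Usl2 K := RingQuot.mkAlgHom (Kq K) (SRel K) (ι (Kq K) SGen.E)
def genF (K : Type) [Field K] : Usl2 K := RingQuot.mkAlgHom (Kq K) (SRel K) (ι (Kq K) SGen.F)
def genK (K : Type) [Field K] : Usl2 K := RingQuot.mkAlgHom (Kq K) (SRel K) (ι (Kq K) SGen.K)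
def genKinv (K : Type) [Field K] : Usl2 K := RingQuot.mkAlgHom (Kq K) (SRel K) (ι (Kq K) SGen.Kinv)

def genX (K : Type) [Field K] : Ueq2 K := RingQuot.mkAlgHom (Kq K) (TRel K) (ι (Kq K) TGen.X)
def genXinv (K : Type) [Field K] : Ueq2 K := RingQuot.mkAlgHom (Kq K) (TRel K) (ι (Kq K) TGen.Xinv)
def genY (K : Type) [Field K] : Ueq2 K := RingQuot.mkAlgHom (Kq K) (TRel K) (ι (Kq K) TGen.Y)
def genZ (K : Type) [Field K] : Ueq2 K := RingQuot.mkAlgHom (Kq K) (TRel K) (ι (Kq K) TGen.Z)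

end

/-!
Writing `[a, b]_q = q a b - q⁻¹ b a`, the relations of `U'` say `X X⁻¹ = X⁻¹ X = 1` and
`[X, Y]_q = [Y, Z]_q = [Z, X]_q = q - q⁻¹`. The proposed images of `X, X⁻¹, Y, Z` in `U' ⊗ U'`
satisfy the same relations: `[·, ·]_q` is bilinear and, on pure tensors one of whose factors
commute, it is computed factorwise, so everything reduces to the relations of `U'` together with
their conjugates `[Y, X⁻¹]_q = [X⁻¹, Z]_q = (q - q⁻¹) X⁻²`. The same holds trivially for
`1, 1, 1, 1` in `𝕂(q)`, so `Δ` and `ε` exist. An algebra map out of `U'` is determined by the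
images of `X, Y, Z` (that of `X⁻¹` is the inverse of that of `X`), which gives uniqueness and
reduces the comparison with `U_q(sl₂)` to the generators: `θ(Y) = K⁻¹ + (q - q⁻¹) F` and
`θ(Z) = K⁻¹ - q (q - q⁻¹) K⁻¹ E` are both elements `w` with `Δ_std w = (w - 1) ⊗ K⁻¹ + 1 ⊗ w`.
-/

open TensorProduct

section QCommutator

variable {R A B : Type*} [Field R] [Ring A] [Algebra R A] [Ring B] [Algebra R B]

def qComm (q : R) : A →ₗ[R] A →ₗ[R] A :=
  q • LinearMap.mul R A - q⁻¹ • (LinearMap.mul R A).flip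

lemma qComm_apply (q : R) (a b : A) : qComm q a b = q • (a * b) - q⁻¹ • (b * a) := rfl

@[simp]
lemma qComm_one_left (q : R) (a : A) : qComm q 1 a = (q - q⁻¹) • a := by
  simp [qComm_apply, sub_smul]

@[simp]
lemma qComm_one_right (q : R) (a : A) : qComm q a 1 = (q - q⁻¹) • a := by
  simp [qComm_apply, sub_smul]

lemma qComm_tmul_tmul_of_commute_left (q : R) {a b : A} (hab : Commute a b) (c d : B) :
    qComm q (a ⊗ₜ[R] c) (b ⊗ₜ[R] d) = (a * b) ⊗ₜ[R] qComm q c d := by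
  simp [qComm_apply, Algebra.TensorProduct.tmul_mul_tmul, hab.eq, tmul_sub, tmul_smul]

lemma qComm_tmul_tmul_of_commute_right (q : R) (a b : A) {c d : B} (hcd : Commute c d) :
    qComm q (a ⊗ₜ[R] c) (b ⊗ₜ[R] d) = qComm q a b ⊗ₜ[R] (c * d) := by
  simp [qComm_apply, Algebra.TensorProduct.tmul_mul_tmul, hcd.eq, sub_tmul, smul_tmul']

end QCommutator

section Equitable

variable {R A : Type*} [Field R] [Ring A] [Algebra R A]

/-- The relations `(q a b - q⁻¹ b a) / (q - q⁻¹) = 1` of the paper, with the denominator cleared. -/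
structure IsEquitable (q : R) (x xi y z : A) : Prop where
  mul_inv : x * xi = 1
  inv_mul : xi * x = 1
  qComm_xy : qComm q x y = (q - q⁻¹) • 1
  qComm_yz : qComm q y z = (q - q⁻¹) • 1
  qComm_zx : qComm q z x = (q - q⁻¹) • 1

namespace IsEquitable

lemma one (q : R) : IsEquitable q (1 : A) 1 1 1 := by
  constructor <;> simp

variable {q : R} {x xi y z : A}

lemma qComm_y_inv (h : IsEquitable q x xi y z) : qComm q y xi = (q - q⁻¹) • (xi * xi) := by
  calc qComm q y xi = xi * qComm q x y * xi := by
        simp only [qComm_apply, mul_sub, sub_mul, mul_smul_comm, smul_mul_assoc, ← mul_assoc,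
          h.inv_mul, one_mul]
        simp only [mul_assoc, h.mul_inv, mul_one]
    _ = (q - q⁻¹) • (xi * xi) := by simp [h.qComm_xy]

lemma qComm_inv_z (h : IsEquitable q x xi y z) : qComm q xi z = (q - q⁻¹) • (xi * xi) := by
  calc qComm q xi z = xi * qComm q z x * xi := by
        simp only [qComm_apply, mul_sub, sub_mul, mul_smul_comm, smul_mul_assoc, ← mul_assoc,
          h.inv_mul, one_mul]
        simp only [mul_assoc, h.mul_inv, mul_one]
    _ = (q - q⁻¹) • (xi * xi) := by simp [h.qComm_zx]

lemma tmul (h : IsEquitable q x xi y z) :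
    IsEquitable q (x ⊗ₜ[R] x) (xi ⊗ₜ[R] xi) ((y - 1) ⊗ₜ[R] xi + 1 ⊗ₜ[R] y)
      ((z - 1) ⊗ₜ[R] xi + 1 ⊗ₜ[R] z) where
  mul_inv := by rw [Algebra.TensorProduct.tmul_mul_tmul, h.mul_inv, Algebra.TensorProduct.one_def]
  inv_mul := by rw [Algebra.TensorProduct.tmul_mul_tmul, h.inv_mul, Algebra.TensorProduct.one_def]
  qComm_xy := by
    have hxy : qComm q x (y - 1) = (q - q⁻¹) • (1 - x) := by
      rw [map_sub, h.qComm_xy, qComm_one_right, smul_sub]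
    rw [map_add, qComm_tmul_tmul_of_commute_right q _ _ (h.mul_inv.trans h.inv_mul.symm),
      qComm_tmul_tmul_of_commute_left q (Commute.one_right x), hxy, h.qComm_xy, h.mul_inv,
      mul_one, ← smul_tmul', tmul_smul, ← smul_add, ← add_tmul, sub_add_cancel,
      Algebra.TensorProduct.one_def]
  qComm_yz := by
    have hyz : qComm q (y - 1) (z - 1) = (q - q⁻¹) • (-(y - 1) - (z - 1)) := by
      rw [map_sub, LinearMap.map_sub₂, LinearMap.map_sub₂, h.qComm_yz, qComm_one_left,
        qComm_one_right, qComm_one_left]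
      module
    rw [map_add, LinearMap.map_add₂, LinearMap.map_add₂,
      qComm_tmul_tmul_of_commute_right q _ _ (Commute.refl xi),
      qComm_tmul_tmul_of_commute_left q (Commute.one_right (y - 1)),
      qComm_tmul_tmul_of_commute_left q (Commute.one_left (z - 1)),
      qComm_tmul_tmul_of_commute_left q (Commute.one_left 1),
      hyz, h.qComm_inv_z, h.qComm_y_inv, h.qComm_yz]
    simp only [← smul_tmul', tmul_smul, ← smul_add, ← add_assoc, ← add_tmul, mul_one, one_mul]
    rw [show -(y - 1) - (z - 1) + (z - 1) + (y - 1) = 0 by abel, zero_tmul, zero_add,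
      Algebra.TensorProduct.one_def]
  qComm_zx := by
    have hzx : qComm q (z - 1) x = (q - q⁻¹) • (1 - x) := by
      rw [LinearMap.map_sub₂, h.qComm_zx, qComm_one_left, smul_sub]
    rw [LinearMap.map_add₂, qComm_tmul_tmul_of_commute_right q _ _ (h.inv_mul.trans h.mul_inv.symm),
      qComm_tmul_tmul_of_commute_left q (Commute.one_left x), hzx, h.qComm_zx, h.inv_mul,
      one_mul, ← smul_tmul', tmul_smul, ← smul_add, ← add_tmul, sub_add_cancel,
      Algebra.TensorProduct.one_def]

end IsEquitable

end Equitable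

lemma qv_sub_inv_ne_zero (K : Type) [Field K] : qv K - (qv K)⁻¹ ≠ 0 := by
  intro h
  have hX : (RatFunc.X : RatFunc K) * RatFunc.X = 1 := by
    have hq : qv K ≠ 0 := RatFunc.X_ne_zero
    rw [sub_eq_zero, ← mul_eq_one_iff_eq_inv₀ hq] at h
    exact h
  simpa [RatFunc.intDegree_mul RatFunc.X_ne_zero RatFunc.X_ne_zero] using
    congrArg RatFunc.intDegree hX

namespace Ueq2

variable (K : Type) [Field K]

lemma isEquitable_gen : IsEquitable (qv K) (genX K) (genXinv K) (genY K) (genZ K) := by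
  have rel {a b} (r : TRel K a b) := RingQuot.mkAlgHom_rel (Kq K) r
  refine ⟨?_, ?_, ?_, ?_, ?_⟩
  · simpa [genX, genXinv, genY, genZ, qComm_apply] using rel .e1a
  · simpa [genX, genXinv, genY, genZ, qComm_apply] using rel .e1b
  · rw [← inv_smul_eq_iff₀ (qv_sub_inv_ne_zero K)]
    simpa [genX, genXinv, genY, genZ, qComm_apply] using rel .e2
  · rw [← inv_smul_eq_iff₀ (qv_sub_inv_ne_zero K)]
    simpa [genX, genXinv, genY, genZ, qComm_apply] using rel .e3
  · rw [← inv_smul_eq_iff₀ (qv_sub_inv_ne_zero K)]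
    simpa [genX, genXinv, genY, genZ, qComm_apply] using rel .e4

variable {K} in
lemma algHom_ext {A : Type*} [Semiring A] [Algebra (Kq K) A] {f g : Ueq2 K →ₐ[Kq K] A}
    (hX : f (genX K) = g (genX K)) (hY : f (genY K) = g (genY K))
    (hZ : f (genZ K) = g (genZ K)) : f = g := by
  have hXinv : f (genXinv K) = g (genXinv K) := by
    refine left_inv_eq_right_inv (a := f (genX K)) ?_ ?_
    · rw [← map_mul, (isEquitable_gen K).inv_mul, map_one]
    · rw [hX, ← map_mul, (isEquitable_gen K).mul_inv, map_one]
  refine RingQuot.ringQuot_ext' _ _ _ (FreeAlgebra.hom_ext (funext fun t => ?_))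
  cases t
  exacts [hX, hXinv, hY, hZ]

variable {K} {A : Type*} [Ring A] [Algebra (Kq K) A] {x xi y z : A}

noncomputable def lift (h : IsEquitable (qv K) x xi y z) : Ueq2 K →ₐ[Kq K] A :=
  RingQuot.liftAlgHom (Kq K)
    ⟨FreeAlgebra.lift (Kq K) fun | .X => x | .Xinv => xi | .Y => y | .Z => z, fun _ _ r => by
      cases r <;>
        simp only [map_mul, map_one, map_smul, map_sub, FreeAlgebra.lift_ι_apply] <;>
        simp only [← qComm_apply, h.mul_inv, h.inv_mul, h.qComm_xy, h.qComm_yz, h.qComm_zx,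
          inv_smul_smul₀ (qv_sub_inv_ne_zero K)]⟩

variable (h : IsEquitable (qv K) x xi y z)
include h

@[simp] lemma lift_genX : lift h (genX K) = x := by
  rw [lift, genX, RingQuot.liftAlgHom_mkAlgHom_apply, FreeAlgebra.lift_ι_apply]

@[simp] lemma lift_genXinv : lift h (genXinv K) = xi := by
  rw [lift, genXinv, RingQuot.liftAlgHom_mkAlgHom_apply, FreeAlgebra.lift_ι_apply]

@[simp] lemma lift_genY : lift h (genY K) = y := by
  rw [lift, genY, RingQuot.liftAlgHom_mkAlgHom_apply, FreeAlgebra.lift_ι_apply]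

@[simp] lemma lift_genZ : lift h (genZ K) = z := by
  rw [lift, genZ, RingQuot.liftAlgHom_mkAlgHom_apply, FreeAlgebra.lift_ι_apply]

end Ueq2

lemma Usl2.genK_mul_genKinv (K : Type) [Field K] : genK K * genKinv K = 1 := by
  simpa [genK, genKinv] using RingQuot.mkAlgHom_rel (Kq K) (SRel.r1a (K := K))

lemma Usl2.genKinv_mul_genK (K : Type) [Field K] : genKinv K * genK K = 1 := by
  simpa [genK, genKinv] using RingQuot.mkAlgHom_rel (Kq K) (SRel.r1b (K := K))

section StandardComultiplication

variable {R B : Type*} [Field R] [Ring B] [Algebra R B] {e f k ki : B} (D : B →ₐ[R] B ⊗[R] B)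

lemma comul_equitableY (hf : D f = f ⊗ₜ ki + 1 ⊗ₜ f) (hki : D ki = ki ⊗ₜ ki) (c : R) :
    D (ki + c • f) = (ki + c • f - 1) ⊗ₜ ki + 1 ⊗ₜ (ki + c • f) := by
  rw [map_add, map_smul, hf, hki]
  simp only [add_tmul, sub_tmul, tmul_add, ← smul_tmul', tmul_smul]
  module

lemma comul_equitableZ (he : D e = e ⊗ₜ 1 + k ⊗ₜ e) (hki : D ki = ki ⊗ₜ ki) (hkik : ki * k = 1)
    (c : R) : D (ki - c • (ki * e)) = (ki - c • (ki * e) - 1) ⊗ₜ ki + 1 ⊗ₜ (ki - c • (ki * e)) := by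
  rw [map_sub, map_smul, map_mul, he, hki, mul_add, Algebra.TensorProduct.tmul_mul_tmul,
    Algebra.TensorProduct.tmul_mul_tmul, hkik, mul_one]
  simp only [sub_tmul, tmul_sub, ← smul_tmul', tmul_smul]
  module

end StandardComultiplication

/-- Existence and uniqueness of the comultiplication `Δ` and counit `ε`
of `U'` in terms of the equitable generators, and their correspondence under the
isomorphism `θ : U' → U_q(sl₂)` with the standard comultiplication and counit. -/
theorem equitable_comul_counit_sl2 (K : Type) [Field K] :
    (∃! Δ : Ueq2 K →ₐ[Kq K] (Ueq2 K ⊗[Kq K] Ueq2 K),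
        Δ (genX K) = genX K ⊗ₜ[Kq K] genX K ∧
        Δ (genXinv K) = genXinv K ⊗ₜ[Kq K] genXinv K ∧
        Δ (genY K) = (genY K - 1) ⊗ₜ[Kq K] genXinv K + 1 ⊗ₜ[Kq K] genY K ∧
        Δ (genZ K) = (genZ K - 1) ⊗ₜ[Kq K] genXinv K + 1 ⊗ₜ[Kq K] genZ K) ∧
    (∃! ε : Ueq2 K →ₐ[Kq K] Kq K,
        ε (genX K) = 1 ∧ ε (genY K) = 1 ∧ ε (genZ K) = 1) ∧
    (∀ (Δ : Ueq2 K →ₐ[Kq K] (Ueq2 K ⊗[Kq K] Ueq2 K)) (ε : Ueq2 K →ₐ[Kq K] Kq K)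
        (θ : Ueq2 K ≃ₐ[Kq K] Usl2 K)
        (Δstd : Usl2 K →ₐ[Kq K] (Usl2 K ⊗[Kq K] Usl2 K)) (εstd : Usl2 K →ₐ[Kq K] Kq K),
      (Δ (genX K) = genX K ⊗ₜ[Kq K] genX K ∧
        Δ (genXinv K) = genXinv K ⊗ₜ[Kq K] genXinv K ∧
        Δ (genY K) = (genY K - 1) ⊗ₜ[Kq K] genXinv K + 1 ⊗ₜ[Kq K] genY K ∧
        Δ (genZ K) = (genZ K - 1) ⊗ₜ[Kq K] genXinv K + 1 ⊗ₜ[Kq K] genZ K) →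
      (ε (genX K) = 1 ∧ ε (genY K) = 1 ∧ ε (genZ K) = 1) →
      (θ (genX K) = genK K ∧ θ (genXinv K) = genKinv K ∧
        θ (genY K) = genKinv K + (qv K - (qv K)⁻¹) • genF K ∧
        θ (genZ K) = genKinv K - (qv K * (qv K - (qv K)⁻¹)) • (genKinv K * genE K)) →
      (Δstd (genE K) = genE K ⊗ₜ[Kq K] 1 + genK K ⊗ₜ[Kq K] genE K ∧
        Δstd (genF K) = genF K ⊗ₜ[Kq K] genKinv K + 1 ⊗ₜ[Kq K] genF K ∧
        Δstd (genK K) = genK K ⊗ₜ[Kq K] genK K ∧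
        Δstd (genKinv K) = genKinv K ⊗ₜ[Kq K] genKinv K) →
      (εstd (genE K) = 0 ∧ εstd (genF K) = 0 ∧ εstd (genK K) = 1) →
      (Algebra.TensorProduct.map θ.toAlgHom θ.toAlgHom).comp Δ = Δstd.comp θ.toAlgHom ∧
        ε = εstd.comp θ.toAlgHom) := by
  have hgen := Ueq2.isEquitable_gen K
  refine ⟨⟨Ueq2.lift hgen.tmul, by simp, fun Δ hΔ => ?_⟩,
    ⟨Ueq2.lift (IsEquitable.one (qv K)), by simp, fun ε hε => ?_⟩, ?_⟩
  · exact Ueq2.algHom_ext (by simp [hΔ.1]) (by simp [hΔ.2.2.1]) (by simp [hΔ.2.2.2])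
  · exact Ueq2.algHom_ext (by simp [hε.1]) (by simp [hε.2.1]) (by simp [hε.2.2])
  rintro Δ ε θ Δstd εstd ⟨hΔX, -, hΔY, hΔZ⟩ ⟨hεX, hεY, hεZ⟩ ⟨hθX, hθXinv, hθY, hθZ⟩
    ⟨hE, hF, hK, hKinv⟩ ⟨hεE, hεF, hεK⟩
  have hεKinv : εstd (genKinv K) = 1 := by
    simpa [hεK] using congrArg εstd (Usl2.genK_mul_genKinv K)
  refine ⟨Ueq2.algHom_ext ?_ ?_ ?_, Ueq2.algHom_ext ?_ ?_ ?_⟩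
  · simp [hΔX, hθX, hK]
  · simp [hΔY, hθY, hθXinv, comul_equitableY Δstd hF hKinv]
  · simp [hΔZ, hθZ, hθXinv, comul_equitableZ Δstd hE hKinv (Usl2.genKinv_mul_genK K)]
  · simp [hεX, hθX, hεK]
  · simp [hεY, hθY, hεKinv, hεF]
  · simp [hεZ, hθZ, hεKinv, hεE]
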